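/- Let n, d, p, r be positive integers, F ∈ ℝ^{n×d}, λ > 0, X_* ∈ ℝ^{d×r}, and ε ∈ ℝⁿ; set y := |F X_*| + ε and assume y_i ≥ 0 for all i. Let U_* ∈ ℝ^{n×r} have unit-norm rows with F X_* = diag(|F X_*|) U_*, let M_λ := λ · diag(y)(nλ I_n + F Fᵀ)^{-1} diag(y), and let R_λ := (nλ I_d + Fᵀ F)^{-1} Fᵀ diag(y). Then for every U ∈ ℝ^{n×p} with unit-norm rows, the matrix X := R_λ U satisfies: ⟨M_λ, U Uᵀ − U_* U_*ᵀ⟩ ≥ (1/n)‖α(X) − α(X_*)‖² − (2/n)⟨ε, α(X) − α(X_*)⟩ + λ(‖X‖² − ‖X_*‖²), where α(X) := |F X| and α(X_*) := |F X_*|. -/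

import Mathlib

open Matrix Filter Finset
open scoped Classical

noncomputable section

/-- Frobenius inner product `⟨A, B⟩ = tr(Bᵀ A)` of real square matrices. -/
def mip {d : ℕ} (A B : Matrix (Fin d) (Fin d) ℝ) : ℝ := (Bᵀ * A).trace

/-- Squared Frobenius norm of a real matrix. -/
def frobSq {m p : ℕ} (X : Matrix (Fin m) (Fin p) ℝ) : ℝ := ∑ i, ∑ j, (X i j) ^ 2

/-- Squared Euclidean norm of a real vector. -/
def vnormSq {n : ℕ} (v : Fin n → ℝ) : ℝ := ∑ i, (v i) ^ 2

/-- Euclidean norm of a real vector. -/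
def vnorm {n : ℕ} (v : Fin n → ℝ) : ℝ := Real.sqrt (vnormSq v)

/-- Euclidean inner product of real vectors. -/
def vip {n : ℕ} (u v : Fin n → ℝ) : ℝ := ∑ i, u i * v i

/-- `ddiag A` keeps the diagonal of `A`, setting off-diagonal entries to zero. -/
def ddiag {n : ℕ} (A : Matrix (Fin n) (Fin n) ℝ) : Matrix (Fin n) (Fin n) ℝ :=
  Matrix.diagonal fun i => A i i

/-- `rowNorms M` is the vector of Euclidean norms of the rows of `M` (`|M|`). -/
def rowNorms {n k : ℕ} (M : Matrix (Fin n) (Fin k) ℝ) : Fin n → ℝ :=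
  fun i => Real.sqrt (∑ j, (M i j) ^ 2)

/-- auxiliary inner product of rectangular matrices -/
def tip {m q : ℕ} (P Q : Matrix (Fin m) (Fin q) ℝ) : ℝ := (Pᵀ * Q).trace

lemma tip_comm {m q : ℕ} (P Q : Matrix (Fin m) (Fin q) ℝ) : tip P Q = tip Q P := by
  rw [tip, tip, ← Matrix.trace_transpose, Matrix.transpose_mul, Matrix.transpose_transpose]

lemma tip_eq_sum {m q : ℕ} (P Q : Matrix (Fin m) (Fin q) ℝ) :
    tip P Q = ∑ i, ∑ j, P i j * Q i j := by
  rw [tip, Matrix.trace]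
  simp only [Matrix.diag_apply, Matrix.mul_apply, Matrix.transpose_apply]
  rw [Finset.sum_comm]

lemma frobSq_eq_tip {m q : ℕ} (P : Matrix (Fin m) (Fin q) ℝ) : frobSq P = tip P P := by
  rw [tip_eq_sum, frobSq]
  simp [sq]

lemma frobSq_nonneg {m q : ℕ} (P : Matrix (Fin m) (Fin q) ℝ) : 0 ≤ frobSq P := by
  apply Finset.sum_nonneg
  intro i _
  exact Finset.sum_nonneg fun j _ => sq_nonneg _

lemma tip_sub_left {m q : ℕ} (P Q R : Matrix (Fin m) (Fin q) ℝ) :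
    tip (P - Q) R = tip P R - tip Q R := by
  simp [tip, Matrix.transpose_sub, Matrix.sub_mul]

lemma tip_add_left {m q : ℕ} (P Q R : Matrix (Fin m) (Fin q) ℝ) :
    tip (P + Q) R = tip P R + tip Q R := by
  simp [tip, Matrix.transpose_add, Matrix.add_mul]

lemma tip_smul_right {m q : ℕ} (c : ℝ) (P Q : Matrix (Fin m) (Fin q) ℝ) :
    tip P (c • Q) = c * tip P Q := by
  simp [tip, Matrix.mul_smul]

lemma tip_mul_left {m d q : ℕ} (F : Matrix (Fin m) (Fin d) ℝ)
    (E : Matrix (Fin d) (Fin q) ℝ) (W : Matrix (Fin m) (Fin q) ℝ) :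
    tip (F * E) W = tip E (Fᵀ * W) := by
  rw [tip, tip, Matrix.transpose_mul, Matrix.mul_assoc]

lemma tip_sub_right {m q : ℕ} (P Q R : Matrix (Fin m) (Fin q) ℝ) :
    tip P (Q - R) = tip P Q - tip P R := by
  simp [tip, Matrix.mul_sub]

lemma tip_add_right {m q : ℕ} (P Q R : Matrix (Fin m) (Fin q) ℝ) :
    tip P (Q + R) = tip P Q + tip P R := by
  simp [tip, Matrix.mul_add]

lemma frobSq_sub {m q : ℕ} (P Q : Matrix (Fin m) (Fin q) ℝ) :
    frobSq (P - Q) = frobSq P - 2 * tip P Q + frobSq Q := by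
  rw [frobSq_eq_tip, frobSq_eq_tip, frobSq_eq_tip, tip_sub_left, tip_sub_right, tip_sub_right,
    tip_comm Q P]
  ring

lemma frobSq_add {m q : ℕ} (P Q : Matrix (Fin m) (Fin q) ℝ) :
    frobSq (P + Q) = frobSq P + 2 * tip P Q + frobSq Q := by
  rw [frobSq_eq_tip, frobSq_eq_tip, frobSq_eq_tip, tip_add_left, tip_add_right, tip_add_right,
    tip_comm Q P]
  ring

lemma invLemma {n d : ℕ} (F : Matrix (Fin n) (Fin d) ℝ) (c : ℝ) (hc : 0 < c) :
    IsUnit (c • (1 : Matrix (Fin d) (Fin d) ℝ) + Fᵀ * F).det := by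
  have h1 : (c • (1 : Matrix (Fin d) (Fin d) ℝ)).PosDef := by
    have h : c • (1 : Matrix (Fin d) (Fin d) ℝ) = Matrix.diagonal (fun _ => c) := by
      ext i j
      by_cases hij : i = j <;> simp [Matrix.diagonal, Matrix.one_apply, hij]
    rw [h]
    exact Matrix.posDef_diagonal_iff.mpr fun _ => hc
  have h2 : (Fᵀ * F).PosSemidef := by
    have := Matrix.posSemidef_conjTranspose_mul_self F
    simpa using this
  exact (h1.add_posSemidef h2).det_pos.ne'.isUnit

/-- Core identity. -/
lemma core {n d q : ℕ} (F : Matrix (Fin n) (Fin d) ℝ) (c : ℝ) (hc : 0 < c)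
    (D : Matrix (Fin n) (Fin n) ℝ) (hD : Dᵀ = D)
    (V : Matrix (Fin n) (Fin q) ℝ) (Z : Matrix (Fin d) (Fin q) ℝ) :
    c * (Vᵀ * (D * (c • (1 : Matrix (Fin n) (Fin n) ℝ) + F * Fᵀ)⁻¹ * D) * V).trace
      + frobSq (F * (Z - (c • (1 : Matrix (Fin d) (Fin d) ℝ) + Fᵀ * F)⁻¹ * Fᵀ * D * V))
      + c * frobSq (Z - (c • (1 : Matrix (Fin d) (Fin d) ℝ) + Fᵀ * F)⁻¹ * Fᵀ * D * V)
    = frobSq (D * V - F * Z) + c * frobSq Z := by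
  set A : Matrix (Fin d) (Fin d) ℝ := c • (1 : Matrix (Fin d) (Fin d) ℝ) + Fᵀ * F with hAdef
  set B : Matrix (Fin n) (Fin n) ℝ := c • (1 : Matrix (Fin n) (Fin n) ℝ) + F * Fᵀ with hBdef
  have hA : IsUnit A.det := invLemma F c hc
  have hB : IsUnit B.det := by
    have := invLemma Fᵀ c hc
    simpa using this
  set Zv : Matrix (Fin d) (Fin q) ℝ := A⁻¹ * Fᵀ * D * V with hZv
  set W : Matrix (Fin n) (Fin q) ℝ := D * V - F * Zv with hWdef
  set E : Matrix (Fin d) (Fin q) ℝ := Z - Zv with hEdef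
  -- B * F = F * A
  have h1 : B * F = F * A := by
    rw [hAdef, hBdef, Matrix.add_mul, Matrix.mul_add, Matrix.smul_mul, Matrix.mul_smul,
      Matrix.one_mul, Matrix.mul_one, Matrix.mul_assoc]
  -- F * A⁻¹ = B⁻¹ * F
  have h2 : F * A⁻¹ = B⁻¹ * F := by
    have e1 : B⁻¹ * (B * F) * A⁻¹ = B⁻¹ * (F * A) * A⁻¹ := by rw [h1]
    simp only [Matrix.mul_assoc] at e1
    rw [Matrix.mul_nonsing_inv A hA, Matrix.mul_one] at e1
    rw [← Matrix.mul_assoc B⁻¹ B, Matrix.nonsing_inv_mul B hB, Matrix.one_mul] at e1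
    exact e1
  -- 1 - F * A⁻¹ * Fᵀ = c • B⁻¹
  have h3 : (1 : Matrix (Fin n) (Fin n) ℝ) - F * A⁻¹ * Fᵀ = c • B⁻¹ := by
    have e1 : F * A⁻¹ * Fᵀ = B⁻¹ * (F * Fᵀ) := by
      rw [h2, Matrix.mul_assoc]
    have e2 : F * Fᵀ = B - c • (1 : Matrix (Fin n) (Fin n) ℝ) := by
      rw [hBdef]; abel
    rw [e1, e2, Matrix.mul_sub, Matrix.nonsing_inv_mul B hB, Matrix.mul_smul, Matrix.mul_one]
    abel
  -- W = c • (B⁻¹ * (D * V))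
  have hW : W = c • (B⁻¹ * (D * V)) := by
    have e1 : F * Zv = (F * A⁻¹ * Fᵀ) * (D * V) := by
      rw [hZv]; simp only [Matrix.mul_assoc]
    rw [hWdef, e1]
    have e2 : D * V = (1 : Matrix (Fin n) (Fin n) ℝ) * (D * V) := by rw [Matrix.one_mul]
    calc D * V - (F * A⁻¹ * Fᵀ) * (D * V)
        = ((1 : Matrix (Fin n) (Fin n) ℝ) - F * A⁻¹ * Fᵀ) * (D * V) := by
          rw [Matrix.sub_mul, Matrix.one_mul]
      _ = (c • B⁻¹) * (D * V) := by rw [h3]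
      _ = c • (B⁻¹ * (D * V)) := by rw [Matrix.smul_mul]
  -- Fᵀ * W = c • Zv
  have e1 : A * Zv = Fᵀ * (D * V) := by
    have h' : A * Zv = A * A⁻¹ * (Fᵀ * (D * V)) := by
      rw [hZv]; simp only [Matrix.mul_assoc]
    rw [Matrix.mul_nonsing_inv A hA, Matrix.one_mul] at h'
    exact h'
  have hFtW : Fᵀ * W = c • Zv := by
    have e3 : Fᵀ * (F * Zv) = A * Zv - c • Zv := by
      rw [hAdef, Matrix.add_mul, Matrix.smul_mul, Matrix.one_mul, Matrix.mul_assoc]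
      abel
    have e4 : Fᵀ * W = Fᵀ * (D * V) - Fᵀ * (F * Zv) := by rw [hWdef, Matrix.mul_sub]
    rw [e4, e3, e1]
    abel
  -- key trace identity: c * T = frobSq W + c * frobSq Zv
  have hT : c * (Vᵀ * (D * B⁻¹ * D) * V).trace = frobSq W + c * frobSq Zv := by
    have e0 : tip (D * V) W = c * (Vᵀ * (D * B⁻¹ * D) * V).trace := by
      rw [tip, Matrix.transpose_mul, hD, hW, Matrix.mul_smul, Matrix.trace_smul]
      simp only [Matrix.mul_assoc, smul_eq_mul]
    have e1 : tip (D * V) W = tip W W + tip (F * Zv) W := by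
      have : D * V = W + F * Zv := by rw [hWdef]; abel
      rw [this, tip_add_left]
    have e2 : tip (F * Zv) W = c * tip Zv Zv := by
      rw [tip_mul_left, hFtW, tip_smul_right]
    rw [← e0, e1, e2, frobSq_eq_tip, frobSq_eq_tip]
  -- expansions
  have hDVFZ : D * V - F * Z = W - F * E := by
    rw [hWdef, hEdef, Matrix.mul_sub]; abel
  have hZ : Z = Zv + E := by rw [hEdef]; abel
  have hexp1 : frobSq (D * V - F * Z) = frobSq W - 2 * (c * tip Zv E) + frobSq (F * E) := by
    rw [hDVFZ, frobSq_sub]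
    have : tip W (F * E) = c * tip Zv E := by
      rw [tip_comm W (F * E), tip_mul_left, hFtW, tip_smul_right, tip_comm E Zv]
    rw [this]
  have hexp2 : frobSq Z = frobSq Zv + 2 * tip Zv E + frobSq E := by
    rw [hZ, frobSq_add]
  rw [hexp1, hexp2, hT]
  ring

lemma frobSq_zero {m q : ℕ} : frobSq (0 : Matrix (Fin m) (Fin q) ℝ) = 0 := by
  simp [frobSq]

lemma row_ineq {p : ℕ} (u v : Fin p → ℝ) (hu : ∑ j, u j ^ 2 = 1) (t : ℝ) (ht : 0 ≤ t) :
    (t - Real.sqrt (∑ j, v j ^ 2)) ^ 2 ≤ ∑ j, (t * u j - v j) ^ 2 := by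
  have hs : Real.sqrt (∑ j, v j ^ 2) ^ 2 = ∑ j, v j ^ 2 :=
    Real.sq_sqrt (Finset.sum_nonneg fun j _ => sq_nonneg _)
  have hcs : (∑ j, u j * v j) ≤ Real.sqrt (∑ j, v j ^ 2) := by
    have h1 : (∑ j, u j * v j) ^ 2 ≤ (∑ j, u j ^ 2) * ∑ j, v j ^ 2 :=
      Finset.sum_mul_sq_le_sq_mul_sq _ _ _
    rw [hu, one_mul] at h1
    calc (∑ j, u j * v j) ≤ |∑ j, u j * v j| := le_abs_self _
      _ = Real.sqrt ((∑ j, u j * v j) ^ 2) := (Real.sqrt_sq_eq_abs _).symm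
      _ ≤ Real.sqrt (∑ j, v j ^ 2) := Real.sqrt_le_sqrt h1
  have hexp : ∑ j, (t * u j - v j) ^ 2
      = t ^ 2 * (∑ j, u j ^ 2) - 2 * t * (∑ j, u j * v j) + ∑ j, v j ^ 2 := by
    have h2 : ∀ j : Fin p, (t * u j - v j) ^ 2
        = t ^ 2 * u j ^ 2 - 2 * t * (u j * v j) + v j ^ 2 := fun j => by ring
    rw [Finset.sum_congr rfl fun j _ => h2 j, Finset.sum_add_distrib, Finset.sum_sub_distrib,
      ← Finset.mul_sum, ← Finset.mul_sum]
  rw [hexp, hu, mul_one]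
  nlinarith [mul_le_mul_of_nonneg_left hcs ht, hs]

/-- Basic PhaseCut objective-difference inequality: for any feasible `U` with
`X = R_λ U`, `⟨M_λ, UUᵀ − U⋆U⋆ᵀ⟩ ≥ (1/n)‖α(X) − α(X⋆)‖² − (2/n)⟨ε, α(X) − α(X⋆)⟩
+ λ(‖X‖² − ‖X⋆‖²)`. -/
theorem stmt16 {n d p r : ℕ} (hn : 0 < n) (hd : 0 < d) (hp : 0 < p) (hr : 0 < r)
    (F : Matrix (Fin n) (Fin d) ℝ) (lam : ℝ) (hlam : 0 < lam)
    (Xstar : Matrix (Fin d) (Fin r) ℝ) (ε : Fin n → ℝ)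
    (y : Fin n → ℝ) (hy_def : ∀ i, y i = rowNorms (F * Xstar) i + ε i)
    (hy : ∀ i, 0 ≤ y i)
    (Ustar : Matrix (Fin n) (Fin r) ℝ)
    (hUstar : ∀ i, ∑ j, (Ustar i j) ^ 2 = 1)
    (hUstar_def : F * Xstar = Matrix.diagonal (rowNorms (F * Xstar)) * Ustar)
    (Mlam : Matrix (Fin n) (Fin n) ℝ)
    (hMlam : Mlam = lam • (Matrix.diagonal y
        * (((n:ℝ) * lam) • (1 : Matrix (Fin n) (Fin n) ℝ) + F * Fᵀ)⁻¹
        * Matrix.diagonal y))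
    (Rlam : Matrix (Fin d) (Fin n) ℝ)
    (hRlam : Rlam = (((n:ℝ) * lam) • (1 : Matrix (Fin d) (Fin d) ℝ) + Fᵀ * F)⁻¹
        * Fᵀ * Matrix.diagonal y)
    (U : Matrix (Fin n) (Fin p) ℝ) (hU : ∀ i, ∑ j, (U i j) ^ 2 = 1)
    (X : Matrix (Fin d) (Fin p) ℝ) (hX : X = Rlam * U) :
    (1 / (n:ℝ)) * vnormSq (rowNorms (F * X) - rowNorms (F * Xstar))
        - (2 / (n:ℝ)) * vip ε (rowNorms (F * X) - rowNorms (F * Xstar))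
        + lam * (frobSq X - frobSq Xstar) ≤
      mip Mlam (U * Uᵀ - Ustar * Ustarᵀ) := by
  have hnR : (0:ℝ) < (n:ℝ) := Nat.cast_pos.mpr hn
  have hne : (n:ℝ) ≠ 0 := ne_of_gt hnR
  have hc : (0:ℝ) < (n:ℝ) * lam := mul_pos hnR hlam
  set D : Matrix (Fin n) (Fin n) ℝ := Matrix.diagonal y with hDdef
  have hD : Dᵀ = D := Matrix.diagonal_transpose y
  set Binv : Matrix (Fin n) (Fin n) ℝ :=
    (((n:ℝ) * lam) • (1 : Matrix (Fin n) (Fin n) ℝ) + F * Fᵀ)⁻¹ with hBinv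
  -- mip on rank-one-type terms
  have mip_eq : ∀ {q : ℕ} (V : Matrix (Fin n) (Fin q) ℝ),
      ((V * Vᵀ)ᵀ * Mlam).trace = lam * (Vᵀ * (D * Binv * D) * V).trace := by
    intro q V
    rw [hMlam, Matrix.transpose_mul, Matrix.transpose_transpose,
      Matrix.mul_smul, Matrix.trace_smul, smul_eq_mul]
    congr 1
    rw [Matrix.mul_assoc V Vᵀ, Matrix.trace_mul_comm]
  -- core for U
  have hXZv : X = (((n:ℝ) * lam) • (1 : Matrix (Fin d) (Fin d) ℝ) + Fᵀ * F)⁻¹ * Fᵀ * D * U := by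
    rw [hX, hRlam]
  have hcoreU := core F ((n:ℝ) * lam) hc D hD U X
  rw [← hXZv] at hcoreU
  simp only [sub_self, Matrix.mul_zero, frobSq_zero, add_zero, mul_zero] at hcoreU
  -- core for Ustar
  have hcoreS := core F ((n:ℝ) * lam) hc D hD Ustar Xstar
  have hS_le : ((n:ℝ) * lam) * (Ustarᵀ * (D * Binv * D) * Ustar).trace
      ≤ frobSq (D * Ustar - F * Xstar) + ((n:ℝ) * lam) * frobSq Xstar := by
    have h1 := frobSq_nonneg (F * (Xstar -
      (((n:ℝ) * lam) • (1 : Matrix (Fin d) (Fin d) ℝ) + Fᵀ * F)⁻¹ * Fᵀ * D * Ustar))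
    have h2 := mul_nonneg hc.le (frobSq_nonneg (Xstar -
      (((n:ℝ) * lam) • (1 : Matrix (Fin d) (Fin d) ℝ) + Fᵀ * F)⁻¹ * Fᵀ * D * Ustar))
    linarith [hcoreS]
  -- frobSq (D*Ustar - F*Xstar) = vnormSq ε
  have hstar : frobSq (D * Ustar - F * Xstar) = vnormSq ε := by
    rw [hUstar_def, frobSq]
    have h1 : ∀ i, ∑ j,
        ((D * Ustar - Matrix.diagonal (rowNorms (F * Xstar)) * Ustar) i j) ^ 2 = (ε i) ^ 2 := by
      intro i
      have h2 : ∀ j, ((D * Ustar - Matrix.diagonal (rowNorms (F * Xstar)) * Ustar) i j) ^ 2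
          = (ε i) ^ 2 * (Ustar i j) ^ 2 := by
        intro j
        have : (D * Ustar - Matrix.diagonal (rowNorms (F * Xstar)) * Ustar) i j
            = ε i * Ustar i j := by
          simp only [Matrix.sub_apply, hDdef, Matrix.diagonal_mul]
          rw [hy_def i]; ring
        rw [this]; ring
      rw [Finset.sum_congr rfl fun j _ => h2 j, ← Finset.mul_sum, hUstar i, mul_one]
    rw [Finset.sum_congr rfl fun i _ => h1 i, vnormSq]
  -- rowwise Cauchy–Schwarz
  have hrows : ∑ i, (y i - rowNorms (F * X) i) ^ 2 ≤ frobSq (D * U - F * X) := by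
    rw [frobSq]
    apply Finset.sum_le_sum
    intro i _
    have h2 : ∀ j, (D * U - F * X) i j = y i * U i j - (F * X) i j := by
      intro j
      simp only [Matrix.sub_apply, hDdef, Matrix.diagonal_mul]
    rw [Finset.sum_congr rfl fun j _ => by rw [h2 j]]
    exact row_ineq (fun j => U i j) (fun j => (F * X) i j) (hU i) (y i) (hy i)
  -- scalar expansion
  have hsum : ∑ i, (y i - rowNorms (F * X) i) ^ 2
      = vnormSq (rowNorms (F * X) - rowNorms (F * Xstar))
        - 2 * vip ε (rowNorms (F * X) - rowNorms (F * Xstar)) + vnormSq ε := by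
    rw [vnormSq, vip, vnormSq]
    have h1 : ∀ i, (y i - rowNorms (F * X) i) ^ 2
        = ((rowNorms (F * X) - rowNorms (F * Xstar)) i) ^ 2
          - 2 * (ε i * (rowNorms (F * X) - rowNorms (F * Xstar)) i) + (ε i) ^ 2 := by
      intro i
      simp only [Pi.sub_apply]
      rw [hy_def i]; ring
    rw [Finset.sum_congr rfl fun i _ => h1 i, Finset.sum_add_distrib, Finset.sum_sub_distrib,
      ← Finset.mul_sum]
  -- mip split
  have hsplit : mip Mlam (U * Uᵀ - Ustar * Ustarᵀ)
      = lam * (Uᵀ * (D * Binv * D) * U).trace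
        - lam * (Ustarᵀ * (D * Binv * D) * Ustar).trace := by
    rw [mip, Matrix.transpose_sub, Matrix.sub_mul, Matrix.trace_sub, mip_eq U, mip_eq Ustar]
  -- numeric assembly
  rw [hsplit]
  rw [hstar] at hS_le
  have a1 : lam * (Uᵀ * (D * Binv * D) * U).trace
      = (1 / (n:ℝ)) * frobSq (D * U - F * X) + lam * frobSq X := by
    field_simp
    linarith [hcoreU]
  have a2 : lam * (Ustarᵀ * (D * Binv * D) * Ustar).trace
      ≤ (1 / (n:ℝ)) * vnormSq ε + lam * frobSq Xstar := by
    calc lam * (Ustarᵀ * (D * Binv * D) * Ustar).trace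
        = (1 / (n:ℝ)) * (((n:ℝ) * lam) * (Ustarᵀ * (D * Binv * D) * Ustar).trace) := by
          field_simp
      _ ≤ (1 / (n:ℝ)) * (vnormSq ε + ((n:ℝ) * lam) * frobSq Xstar) := by
          apply mul_le_mul_of_nonneg_left hS_le
          positivity
      _ = (1 / (n:ℝ)) * vnormSq ε + lam * frobSq Xstar := by
          field_simp
  have a3 : (1 / (n:ℝ)) * (∑ i, (y i - rowNorms (F * X) i) ^ 2)
      ≤ (1 / (n:ℝ)) * frobSq (D * U - F * X) :=
    mul_le_mul_of_nonneg_left hrows (by positivity)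
  have a4 : (1 / (n:ℝ)) * (∑ i, (y i - rowNorms (F * X) i) ^ 2)
      = (1 / (n:ℝ)) * vnormSq (rowNorms (F * X) - rowNorms (F * Xstar))
        - (2 / (n:ℝ)) * vip ε (rowNorms (F * X) - rowNorms (F * Xstar))
        + (1 / (n:ℝ)) * vnormSq ε := by
    rw [hsum]; ring
  linarith [a1, a2, a3, a4]

end
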